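/- Let K be a number field with ring of integers 𝓞_K, let a₁,a₂,a₃,a₄ ∈ 𝓞_K[t], let q_n ∈ 𝓞_K[t] be given by the recursion, and let l > 2 be a prime. Then there exist polynomials f₀, f₁, …, f_l ∈ 𝓞_K[t] (independent of n) such that for every n ∈ ℤ_{≥0}, q_{(n+1)l} ≡ Σ_{i=0}^{l} f_i · a₃^i · q_{nl}^{(i)} modulo the ideal (l, t^l) of 𝓞_K[t], where q^{(i)} denotes the i-th formal derivative. In particular the residues of q_{nl} modulo (l, t^l) satisfy a one-step linear recursion q̄_{(n+1)l} = Ψ(q̄_{nl}) for a fixed additive map Ψ, and consequently the sequence q_m(0) mod l𝓞_K is eventually periodic with pre-period plus period at most l·|𝓞_K/l𝓞_K|^{l}. -/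

import Mathlib

noncomputable section

open Complex Real MeasureTheory

/-- The weight-`k` slash of `f` by `σ_{z₀}`, as a function on the unit disc. -/
def slashDisc (k : ℕ) (z₀ : ℂ) (f : ℂ → ℂ) (w : ℂ) : ℂ :=
  (2 * Complex.I * (z₀.im : ℂ)) ^ (k / 2) * (1 - w) ^ (-(k : ℤ)) *
    f ((z₀ - (starRingEnd ℂ) z₀ * w) / (1 - w))

/-- The `n`-th Fourier (normalized Taylor) coefficient of `f` at `z₀`, in weight `k`. -/
def fourierCoeffAt (k : ℕ) (z₀ : ℂ) (f : ℂ → ℂ) (n : ℕ) : ℂ :=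
  iteratedDeriv n (slashDisc k z₀ f) 0 / (n.factorial : ℂ)

/-- Holomorphic cusp form of weight `k` for `SL(2,ℤ)`. -/
def IsCuspForm (k : ℕ) (f : ℂ → ℂ) : Prop :=
  (∀ z : ℂ, 0 < z.im → DifferentiableAt ℂ f z) ∧
  (∀ γ : Matrix.SpecialLinearGroup (Fin 2) ℤ, ∀ z : ℂ, 0 < z.im →
      f ((((γ : Matrix (Fin 2) (Fin 2) ℤ) 0 0 : ℂ) * z + ((γ : Matrix (Fin 2) (Fin 2) ℤ) 0 1 : ℂ)) /
          (((γ : Matrix (Fin 2) (Fin 2) ℤ) 1 0 : ℂ) * z + ((γ : Matrix (Fin 2) (Fin 2) ℤ) 1 1 : ℂ)))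
        = (((γ : Matrix (Fin 2) (Fin 2) ℤ) 1 0 : ℂ) * z +
            ((γ : Matrix (Fin 2) (Fin 2) ℤ) 1 1 : ℂ)) ^ k * f z) ∧
  (∀ ε : ℝ, 0 < ε → ∃ Y : ℝ, ∀ x y : ℝ, Y < y → ‖f (x + y * Complex.I)‖ < ε)

/-- Ramanujan's Delta function. -/
def Delta (z : ℂ) : ℂ :=
  Complex.exp (2 * π * Complex.I * z) *
    ∏' n : ℕ, (1 - Complex.exp (2 * π * Complex.I * (n + 1) * z)) ^ 24

def E2star (z : ℂ) : ℂ :=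
  1 - 24 * ∑' n : ℕ, (ArithmeticFunction.sigma 1 (n + 1) : ℂ) *
      Complex.exp (2 * π * Complex.I * (n + 1) * z) - 3 / (π * z.im)

def E4 (z : ℂ) : ℂ :=
  1 + 240 * ∑' n : ℕ, (ArithmeticFunction.sigma 3 (n + 1) : ℂ) *
      Complex.exp (2 * π * Complex.I * (n + 1) * z)

def E6 (z : ℂ) : ℂ :=
  1 - 504 * ∑' n : ℕ, (ArithmeticFunction.sigma 5 (n + 1) : ℂ) *
      Complex.exp (2 * π * Complex.I * (n + 1) * z)

/-- The polynomials 𝓑ₙ ∈ ℤ[Q,R]; `X 0` is `Q = E₄`, `X 1` is `R = E₆`. -/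
def Bpoly : ℕ → MvPolynomial (Fin 2) ℤ
  | 0 => 1
  | 1 => 0
  | (n + 2) =>
      -4 * MvPolynomial.X 1 * MvPolynomial.pderiv 0 (Bpoly (n + 1))
        - 6 * MvPolynomial.X 0 ^ 2 * MvPolynomial.pderiv 1 (Bpoly (n + 1))
        - MvPolynomial.C (((n : ℤ) + 1) * ((n : ℤ) + 12)) * MvPolynomial.X 0 * Bpoly n

/-- The polynomials pₙ(t). -/
def ppoly : ℕ → Polynomial ℤ
  | 0 => 1
  | 1 => 0
  | (n + 2) =>
      Polynomial.C (-2 * ((n : ℤ) + 1)) * Polynomial.X * ppoly (n + 1)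
        + 6 * (Polynomial.X ^ 2 - 1) * Polynomial.derivative (ppoly (n + 1))
        - Polynomial.C (((n : ℤ) + 1) * ((n : ℤ) + 12)) * ppoly n

/-- The polynomials qₙ(t). -/
def qpoly : ℕ → Polynomial ℤ
  | 0 => 1
  | 1 => 0
  | (n + 2) =>
      Polynomial.C (-2 * ((n : ℤ) + 1)) * Polynomial.X ^ 2 * qpoly (n + 1)
        + 4 * (Polynomial.X ^ 3 - 1) * Polynomial.derivative (qpoly (n + 1))
        - Polynomial.C (((n : ℤ) + 1) * ((n : ℤ) + 12)) * Polynomial.X * qpoly n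

/-- The general recursion q₀ = 1, q₁ = a₁,
`q_{n+1} = (a₁ + n a₂) q_n + a₃ q_n' + n(n+11) a₄ q_{n-1}`. -/
def qrec {R : Type*} [CommRing R] (a₁ a₂ a₃ a₄ : Polynomial R) : ℕ → Polynomial R
  | 0 => 1
  | 1 => a₁
  | (n + 2) =>
      (a₁ + ((n : Polynomial R) + 1) * a₂) * qrec a₁ a₂ a₃ a₄ (n + 1)
        + a₃ * Polynomial.derivative (qrec a₁ a₂ a₃ a₄ (n + 1))
        + ((n : Polynomial R) + 1) * ((n : Polynomial R) + 12) * a₄ * qrec a₁ a₂ a₃ a₄ n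

/-- Maass raising operator of weight `w`. -/
def raise (w : ℤ) (g : ℂ → ℂ) : ℂ → ℂ := fun z =>
  1 / (2 * π * Complex.I) * deriv g z - (w : ℂ) / (4 * π * z.im) * g z

/-- `raiseIter k m = ∂_{k+2m-2} ∘ ⋯ ∘ ∂_{k+2} ∘ ∂_k`. -/
def raiseIter (k : ℕ) : ℕ → (ℂ → ℂ) → (ℂ → ℂ)
  | 0 => fun g => g
  | (m + 1) => fun g => raise ((k : ℤ) + 2 * m) (raiseIter k m g)

/-- Möbius action of `SL(2,ℤ)` on `ℂ`. -/
def moebius (γ : Matrix.SpecialLinearGroup (Fin 2) ℤ) (z : ℂ) : ℂ :=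
  (((γ : Matrix (Fin 2) (Fin 2) ℤ) 0 0 : ℂ) * z + ((γ : Matrix (Fin 2) (Fin 2) ℤ) 0 1 : ℂ)) /
    (((γ : Matrix (Fin 2) (Fin 2) ℤ) 1 0 : ℂ) * z + ((γ : Matrix (Fin 2) (Fin 2) ℤ) 1 1 : ℂ))

/-- Order of the stabilizer of `z₀` in `PSL(2,ℤ)`. -/
def stabOrder (z₀ : ℂ) : ℕ :=
  Set.ncard {γ : Matrix.SpecialLinearGroup (Fin 2) ℤ | moebius γ z₀ = z₀} / 2

/-- The CM point attached to a fundamental discriminant `D < 0`.  -/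
def cmPoint (D : ℤ) : ℂ :=
  if D % 2 = 0 then Complex.I * (Real.sqrt (|D| : ℝ) : ℂ) / 2
  else (1 + Complex.I * (Real.sqrt (|D| : ℝ) : ℂ)) / 2

/-- A term of the weight-12 elliptic Poincaré series attached to `z₀`. -/
def poincareTerm (z₀ : ℂ) (m : ℕ) (γ : Matrix.SpecialLinearGroup (Fin 2) ℤ) (z : ℂ) : ℂ :=
  (2 * Complex.I * (z₀.im : ℂ)) ^ 6 * (moebius γ z - z₀) ^ m /
    ((moebius γ z - (starRingEnd ℂ) z₀) ^ (m + 12) *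
      (((γ : Matrix (Fin 2) (Fin 2) ℤ) 1 0 : ℂ) * z + ((γ : Matrix (Fin 2) (Fin 2) ℤ) 1 1 : ℂ)) ^ 12)

/-- `𝓔_m(z)`. -/
def Ecal (m : ℕ) (z : ℂ) : ℂ :=
  ∑ r ∈ Finset.range (m + 1),
    ((m.factorial / r.factorial : ℕ) : ℂ) * (Nat.choose (m + 11) (r + 11) : ℂ) *
      E2star z ^ (m - r) * MvPolynomial.aeval ![E4 z, E6 z] (Bpoly r)

/-!
Reduce modulo `l`. Over `𝓞_K / l`, if `l ∣ m` then the coefficients `m + j + 1` of the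
recursion at index `m + j` agree with those at index `j`, and the `q_{m-1}` term drops out
because its coefficient `m (m + 11)` vanishes; so `q_{m+j}` is obtained from `q_m` by the
recursion restarted at index `0`. Unwinding that recursion writes `q_{m+l}` as
`∑_{i ≤ l} fᵢ a₃ⁱ q_m⁽ⁱ⁾`, an operator preserving `(l, t^l)` since `d/dt` does. A residue
modulo `(l, t^l)` is determined by its first `l` coefficients modulo `l`, so two of
`q_0, q_l, …, q_{Nl}` with `N = |𝓞_K / l|^l` agree, and the one-step recursion propagates this
coincidence to all later indices.
-/

section

open Polynomial

variable {R : Type*} [CommRing R]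

theorem ker_mapRingHom_mk_span_singleton (c : R) :
    RingHom.ker (mapRingHom (Ideal.Quotient.mk (Ideal.span {c}))) = Ideal.span {C c} := by
  rw [ker_mapRingHom, Ideal.mk_ker, Ideal.map_span, Set.image_singleton]

theorem mem_span_C_X_pow_iff {c : R} {l : ℕ} {p : R[X]} :
    p ∈ Ideal.span {C c, X ^ l} ↔ ∀ i < l, c ∣ p.coeff i := by
  set ρ := mapRingHom (Ideal.Quotient.mk (Ideal.span {c}))
  have hρ : Function.Surjective ρ := map_surjective _ Ideal.Quotient.mk_surjective
  have hspan : Ideal.span {C c, X ^ l} = (Ideal.span {X ^ l}).comap ρ := by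
    have hmap : (Ideal.span {X ^ l}).map ρ = Ideal.span {X ^ l} := by
      simp [ρ, Ideal.map_span]
    rw [← hmap, Ideal.comap_map_of_surjective' ρ hρ, ker_mapRingHom_mk_span_singleton,
      Ideal.span_insert, sup_comm]
  rw [hspan, Ideal.mem_comap, Ideal.mem_span_singleton, X_pow_dvd_iff]
  simp [ρ, Ideal.Quotient.eq_zero_iff_mem, Ideal.mem_span_singleton]

theorem derivative_mem_span_C_X_pow {l : ℕ} {p : R[X]}
    (hp : p ∈ Ideal.span {C (l : R), X ^ l}) : derivative p ∈ Ideal.span {C (l : R), X ^ l} := by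
  obtain ⟨u, v, rfl⟩ := Ideal.mem_span_pair.mp hp
  refine Ideal.mem_span_pair.mpr ⟨derivative u + v * X ^ (l - 1), derivative v, ?_⟩
  simp only [derivative_add, derivative_mul, derivative_natCast, derivative_X_pow, C_eq_natCast,
    mul_zero, add_zero]
  ring

section Recursion

variable (a₁ a₂ a₃ a₄ : R[X])

theorem qrec_succ (n : ℕ) :
    qrec a₁ a₂ a₃ a₄ (n + 1) = (a₁ + n * a₂) * qrec a₁ a₂ a₃ a₄ n
      + a₃ * derivative (qrec a₁ a₂ a₃ a₄ n) + n * (n + 11) * a₄ * qrec a₁ a₂ a₃ a₄ (n - 1) := by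
  cases n with
  | zero => simp [qrec]
  | succ n => rw [qrec]; push_cast; ring

/-- The recursion of `qrec` restarted from `q₀ = p`; there is no `q₋₁` term because its
coefficient `n (n + 11)` vanishes at `n = 0`. -/
def qrecFrom (p : R[X]) : ℕ → R[X]
  | 0 => p
  | 1 => a₁ * p + a₃ * derivative p
  | (j + 2) =>
      (a₁ + ((j : R[X]) + 1) * a₂) * qrecFrom p (j + 1)
        + a₃ * derivative (qrecFrom p (j + 1))
        + ((j : R[X]) + 1) * ((j : R[X]) + 12) * a₄ * qrecFrom p j

theorem map_qrec {S : Type*} [CommRing S] (φ : R →+* S) (n : ℕ) :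
    (qrec a₁ a₂ a₃ a₄ n).map φ = qrec (a₁.map φ) (a₂.map φ) (a₃.map φ) (a₄.map φ) n := by
  induction n using qrec.induct with
  | case1 => simp [qrec]
  | case2 => simp [qrec]
  | case3 n ih₁ ih₀ => simp [qrec, ih₁, ih₀, ← derivative_map]

theorem map_qrecFrom {S : Type*} [CommRing S] (φ : R →+* S) (p : R[X]) (j : ℕ) :
    (qrecFrom a₁ a₂ a₃ a₄ p j).map φ =
      qrecFrom (a₁.map φ) (a₂.map φ) (a₃.map φ) (a₄.map φ) (p.map φ) j := by
  induction j using qrec.induct with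
  | case1 => simp [qrecFrom]
  | case2 => simp [qrecFrom, ← derivative_map]
  | case3 j ih₁ ih₀ => simp [qrecFrom, ih₁, ih₀, ← derivative_map]

theorem qrec_add_eq_qrecFrom {m : ℕ} (hm : (m : R) = 0) (j : ℕ) :
    qrec a₁ a₂ a₃ a₄ (m + j) = qrecFrom a₁ a₂ a₃ a₄ (qrec a₁ a₂ a₃ a₄ m) j := by
  have hm' : (m : R[X]) = 0 := by rw [← map_natCast C, hm, C_0]
  induction j using qrec.induct with
  | case1 => rfl
  | case2 => simp [qrec_succ, qrecFrom, hm']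
  | case3 j ih₁ ih₀ =>
    rw [show m + (j + 2) = m + (j + 1) + 1 by omega, qrec_succ, qrecFrom, ← ih₁,
      show m + (j + 1) - 1 = m + j by omega, ← ih₀]
    push_cast [hm']
    ring

theorem qrec_add_sub_qrecFrom_mem {c : R} {m : ℕ} (hm : c ∣ m) (j : ℕ) :
    qrec a₁ a₂ a₃ a₄ (m + j) - qrecFrom a₁ a₂ a₃ a₄ (qrec a₁ a₂ a₃ a₄ m) j
      ∈ Ideal.span {C c} := by
  have hm' : ((m : R) : R ⧸ Ideal.span {c}) = 0 :=
    Ideal.Quotient.eq_zero_iff_mem.mpr (Ideal.mem_span_singleton.mpr hm)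
  rw [← ker_mapRingHom_mk_span_singleton, RingHom.mem_ker, map_sub, coe_mapRingHom, map_qrec,
    map_qrecFrom, map_qrec, sub_eq_zero]
  exact qrec_add_eq_qrecFrom _ _ _ _ (by simpa using hm') j

end Recursion

def IsScaledDiffOp (a : R[X]) (j : ℕ) (T : R[X] → R[X]) : Prop :=
  ∃ g : ℕ → R[X], ∀ p, T p = ∑ i ∈ Finset.range (j + 1), g i * a ^ i * derivative^[i] p

namespace IsScaledDiffOp

variable {a : R[X]} {j : ℕ} {T U : R[X] → R[X]}

theorem id : IsScaledDiffOp a 0 fun p => p :=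
  ⟨fun _ => 1, fun p => by simp⟩

theorem mono (hT : IsScaledDiffOp a j T) {k : ℕ} (hjk : j ≤ k) : IsScaledDiffOp a k T := by
  obtain ⟨g, hg⟩ := hT
  refine ⟨fun i => if i ≤ j then g i else 0, fun p => ?_⟩
  rw [hg, ← Finset.sum_subset (Finset.range_subset_range.mpr (by omega : j + 1 ≤ k + 1))]
  · refine Finset.sum_congr rfl fun i hi => ?_
    rw [Finset.mem_range] at hi
    simp [show i ≤ j by omega]
  · intro i _ hi
    rw [Finset.mem_range] at hi
    simp [show ¬i ≤ j by omega]

theorem add (hT : IsScaledDiffOp a j T) (hU : IsScaledDiffOp a j U) :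
    IsScaledDiffOp a j fun p => T p + U p := by
  obtain ⟨g, hg⟩ := hT
  obtain ⟨h, hh⟩ := hU
  exact ⟨g + h, fun p => by simp only [hg, hh, ← Finset.sum_add_distrib, Pi.add_apply, add_mul]⟩

theorem mul_left (c : R[X]) (hT : IsScaledDiffOp a j T) : IsScaledDiffOp a j fun p => c * T p := by
  obtain ⟨g, hg⟩ := hT
  exact ⟨fun i => c * g i, fun p => by simp only [hg, Finset.mul_sum, mul_assoc]⟩

/-- The factor `aⁱ` survives the product rule because `a * D (aⁱ) = i * D a * aⁱ`. -/
theorem mul_derivative (hT : IsScaledDiffOp a j T) :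
    IsScaledDiffOp a (j + 1) fun p => a * derivative (T p) := by
  obtain ⟨g, hg⟩ := hT
  have hterm : ∀ (i : ℕ) (p : R[X]), a * derivative (g i * a ^ i * derivative^[i] p) =
      (a * derivative (g i) + i * derivative a * g i) * a ^ i * derivative^[i] p
        + g i * a ^ (i + 1) * derivative^[i + 1] p := by
    intro i p
    rw [Function.iterate_succ_apply', derivative_mul, derivative_mul, derivative_pow]
    cases i <;> simp <;> ring
  have hlow : IsScaledDiffOp a j fun p => ∑ i ∈ Finset.range (j + 1),
      (a * derivative (g i) + i * derivative a * g i) * a ^ i * derivative^[i] p :=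
    ⟨_, fun _ => rfl⟩
  have hshift : IsScaledDiffOp a (j + 1) fun p => ∑ i ∈ Finset.range (j + 1),
      g i * a ^ (i + 1) * derivative^[i + 1] p :=
    ⟨fun i => if i = 0 then 0 else g (i - 1), fun p => by simp [Finset.sum_range_succ' _ (j + 1)]⟩
  convert (hlow.mono j.le_succ).add hshift using 2 with p
  simp only [hg, derivative_sum, Finset.mul_sum, hterm, Finset.sum_add_distrib]

theorem map_sub (hT : IsScaledDiffOp a j T) (p q : R[X]) : T (p - q) = T p - T q := by
  obtain ⟨g, hg⟩ := hT
  simp only [hg, iterate_derivative_sub, mul_sub, Finset.sum_sub_distrib]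

theorem sub_mem (hT : IsScaledDiffOp a j T) {I : Ideal R[X]} (hI : ∀ p ∈ I, derivative p ∈ I)
    {p q : R[X]} (hpq : p - q ∈ I) : T p - T q ∈ I := by
  rw [← hT.map_sub]
  obtain ⟨g, hg⟩ := hT
  rw [hg]
  exact I.sum_mem fun i _ => I.mul_mem_left _ (Function.Iterate.rec (· ∈ I) hpq hI i)

theorem exists_quotient_map (hT : IsScaledDiffOp a j T) {I : Ideal R[X]}
    (hI : ∀ p ∈ I, derivative p ∈ I) :
    ∃ Ψ : (R[X] ⧸ I) →+ (R[X] ⧸ I), ∀ p, Ψ (Ideal.Quotient.mk I p) = Ideal.Quotient.mk I (T p) :=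
  let T' := AddMonoidHom.ofMapSub T hT.map_sub
  ⟨QuotientAddGroup.map I.toAddSubgroup I.toAddSubgroup T' fun p hp => by
    have h := hT.sub_mem hI (q := 0) (by simpa using hp)
    rwa [show T 0 = 0 from map_zero T', sub_zero] at h, fun _ => rfl⟩

end IsScaledDiffOp

theorem isScaledDiffOp_qrecFrom (a₁ a₂ a₃ a₄ : R[X]) (j : ℕ) :
    IsScaledDiffOp a₃ j fun p => qrecFrom a₁ a₂ a₃ a₄ p j := by
  induction j using qrec.induct with
  | case1 => exact .id
  | case2 =>
    exact ((IsScaledDiffOp.id.mul_left a₁).mono zero_le_one).add IsScaledDiffOp.id.mul_derivative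
  | case3 j h₁ h₀ =>
    exact (((h₁.mul_left _).mono j.succ.le_succ).add h₁.mul_derivative).add
      ((h₀.mul_left _).mono (by omega))

section ModSpanCXPow

variable (a₁ a₂ a₃ a₄ : R[X]) {l : ℕ}

theorem qrec_mul_add_sub_qrecFrom_mem (n j : ℕ) :
    qrec a₁ a₂ a₃ a₄ (n * l + j) - qrecFrom a₁ a₂ a₃ a₄ (qrec a₁ a₂ a₃ a₄ (n * l)) j
      ∈ Ideal.span {C (l : R), X ^ l} :=
  Ideal.span_mono (Set.singleton_subset_iff.mpr (Set.mem_insert _ _))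
    (qrec_add_sub_qrecFrom_mem a₁ a₂ a₃ a₄ (by simp) j)

theorem qrec_mul_add_sub_mem {n n' : ℕ}
    (h : qrec a₁ a₂ a₃ a₄ (n' * l) - qrec a₁ a₂ a₃ a₄ (n * l) ∈ Ideal.span {C (l : R), X ^ l})
    (j : ℕ) :
    qrec a₁ a₂ a₃ a₄ (n' * l + j) - qrec a₁ a₂ a₃ a₄ (n * l + j)
      ∈ Ideal.span {C (l : R), X ^ l} := by
  have hop := (isScaledDiffOp_qrecFrom a₁ a₂ a₃ a₄ j).sub_mem
    (fun _ => derivative_mem_span_C_X_pow) h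
  convert Ideal.add_mem _ (Ideal.sub_mem _ (qrec_mul_add_sub_qrecFrom_mem a₁ a₂ a₃ a₄ n' j)
    (qrec_mul_add_sub_qrecFrom_mem a₁ a₂ a₃ a₄ n j)) hop using 1
  ring

theorem qrec_add_sub_mem_of_mem (hl : 0 < l) {n d : ℕ}
    (h : qrec a₁ a₂ a₃ a₄ ((n + d) * l) - qrec a₁ a₂ a₃ a₄ (n * l)
      ∈ Ideal.span {C (l : R), X ^ l}) {m : ℕ} (hm : n * l ≤ m) :
    qrec a₁ a₂ a₃ a₄ (m + d * l) - qrec a₁ a₂ a₃ a₄ m ∈ Ideal.span {C (l : R), X ^ l} := by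
  have hshift : ∀ k, qrec a₁ a₂ a₃ a₄ ((n + k + d) * l) - qrec a₁ a₂ a₃ a₄ ((n + k) * l)
      ∈ Ideal.span {C (l : R), X ^ l} := by
    intro k
    induction k with
    | zero => simpa using h
    | succ k ih =>
      convert qrec_mul_add_sub_mem a₁ a₂ a₃ a₄ ih l using 3 <;> ring_nf
  obtain ⟨k, hk⟩ : ∃ k, m / l = n + k := ⟨m / l - n, by
    have := (Nat.le_div_iff_mul_le hl).mpr hm; omega⟩
  have hm_eq : m = (n + k) * l + m % l := by rw [← hk, mul_comm]; exact (Nat.div_add_mod m l).symm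
  have h' := qrec_mul_add_sub_mem a₁ a₂ a₃ a₄ (hshift k) (m % l)
  rwa [← hm_eq, show (n + k + d) * l + m % l = m + d * l by linarith] at h'

end ModSpanCXPow

theorem exists_add_sub_mem_span_C_X_pow (c : R) [Finite (R ⧸ Ideal.span {c})] (l : ℕ)
    (u : ℕ → R[X]) :
    ∃ n d, 0 < d ∧ n + d ≤ Nat.card (R ⧸ Ideal.span {c}) ^ l ∧
      u (n + d) - u n ∈ Ideal.span {C c, X ^ l} := by
  set N := Nat.card (R ⧸ Ideal.span {c})
  let F : Fin (N ^ l + 1) → Fin l → R ⧸ Ideal.span {c} :=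
    fun n i => Ideal.Quotient.mk _ ((u n).coeff i)
  obtain ⟨x, y, hF, hne⟩ := Function.not_injective_iff.mp fun hinj => by
    simpa [N, Nat.card_fun] using Nat.card_le_card_of_injective F hinj
  wlog hxy : x < y generalizing x y
  · exact this y x hF.symm hne.symm (lt_of_le_of_ne (not_lt.mp hxy) hne.symm)
  refine ⟨x, y - x, by omega, by omega, mem_span_C_X_pow_iff.mpr fun i hi => ?_⟩
  rw [Nat.add_sub_cancel' hxy.le, coeff_sub, ← Ideal.mem_span_singleton]
  exact Ideal.Quotient.eq.mp (congrFun hF ⟨i, hi⟩).symm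

end

theorem qrec_one_step_recursion_mod_general (K : Type*) [Field K] [NumberField K]
    (a₁ a₂ a₃ a₄ : Polynomial (NumberField.RingOfIntegers K))
    (l : ℕ) (hl : l.Prime) :
    (∃ f : ℕ → Polynomial (NumberField.RingOfIntegers K), ∀ n : ℕ,
        qrec a₁ a₂ a₃ a₄ ((n + 1) * l) -
          ∑ i ∈ Finset.range (l + 1), f i * a₃ ^ i *
            ((fun p => Polynomial.derivative p)^[i] (qrec a₁ a₂ a₃ a₄ (n * l)))
          ∈ Ideal.span ({Polynomial.C (l : NumberField.RingOfIntegers K), Polynomial.X ^ l}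
              : Set (Polynomial (NumberField.RingOfIntegers K)))) ∧
    (∃ Ψ : (Polynomial (NumberField.RingOfIntegers K) ⧸
          Ideal.span ({Polynomial.C (l : NumberField.RingOfIntegers K), Polynomial.X ^ l}
            : Set (Polynomial (NumberField.RingOfIntegers K)))) →+
        (Polynomial (NumberField.RingOfIntegers K) ⧸
          Ideal.span ({Polynomial.C (l : NumberField.RingOfIntegers K), Polynomial.X ^ l}
            : Set (Polynomial (NumberField.RingOfIntegers K)))),
      ∀ n : ℕ,
        Ideal.Quotient.mk
            (Ideal.span ({Polynomial.C (l : NumberField.RingOfIntegers K), Polynomial.X ^ l}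
              : Set (Polynomial (NumberField.RingOfIntegers K))))
            (qrec a₁ a₂ a₃ a₄ ((n + 1) * l)) =
          Ψ (Ideal.Quotient.mk
            (Ideal.span ({Polynomial.C (l : NumberField.RingOfIntegers K), Polynomial.X ^ l}
              : Set (Polynomial (NumberField.RingOfIntegers K))))
            (qrec a₁ a₂ a₃ a₄ (n * l)))) ∧
    ∃ α β : ℕ, 1 ≤ β ∧
      α + β ≤ l * (Nat.card (NumberField.RingOfIntegers K ⧸
        Ideal.span {(l : NumberField.RingOfIntegers K)})) ^ l ∧
      ∀ m : ℕ, α ≤ m → (l : NumberField.RingOfIntegers K) ∣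
        ((qrec a₁ a₂ a₃ a₄ (m + β)).coeff 0 - (qrec a₁ a₂ a₃ a₄ m).coeff 0) := by
  have hop := isScaledDiffOp_qrecFrom a₁ a₂ a₃ a₄ l
  have hstep (n : ℕ) := add_one_mul n l ▸ qrec_mul_add_sub_qrecFrom_mem a₁ a₂ a₃ a₄ n l
  obtain ⟨Ψ, hΨ⟩ := hop.exists_quotient_map fun _ => derivative_mem_span_C_X_pow
  obtain ⟨f, hf⟩ := hop
  have : Finite (NumberField.RingOfIntegers K ⧸ Ideal.span {(l : NumberField.RingOfIntegers K)}) :=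
    Ideal.finiteQuotientOfFreeOfNeBot _ (by simpa using hl.ne_zero)
  obtain ⟨n, d, hd, hnd, hper⟩ :=
    exists_add_sub_mem_span_C_X_pow (l : NumberField.RingOfIntegers K) l
      fun n => qrec a₁ a₂ a₃ a₄ (n * l)
  refine ⟨⟨f, fun n => hf _ ▸ hstep n⟩, ⟨Ψ, fun n => ?_⟩, n * l, d * l, ?_, ?_, fun m hm => ?_⟩
  · rw [hΨ, Ideal.Quotient.eq]
    exact hstep n
  · exact Nat.mul_pos hd hl.pos
  · rw [← add_mul, mul_comm]
    exact Nat.mul_le_mul_left l hnd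
  · have hmem := qrec_add_sub_mem_of_mem a₁ a₂ a₃ a₄ hl.pos hper hm
    simpa using mem_span_C_X_pow_iff.mp hmem 0 hl.pos

/-- the one-step recursion for the subsequence `q_{nl}` modulo `(l, t^l)`,
and the resulting bound on pre-period plus period. -/
theorem qrec_one_step_recursion_mod (K : Type*) [Field K] [NumberField K]
    (a₁ a₂ a₃ a₄ : Polynomial (NumberField.RingOfIntegers K))
    (l : ℕ) (hl : l.Prime) (hl2 : 2 < l) :
    (∃ f : ℕ → Polynomial (NumberField.RingOfIntegers K), ∀ n : ℕ,
        qrec a₁ a₂ a₃ a₄ ((n + 1) * l) -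
          ∑ i ∈ Finset.range (l + 1), f i * a₃ ^ i *
            ((fun p => Polynomial.derivative p)^[i] (qrec a₁ a₂ a₃ a₄ (n * l)))
          ∈ Ideal.span ({Polynomial.C (l : NumberField.RingOfIntegers K), Polynomial.X ^ l}
              : Set (Polynomial (NumberField.RingOfIntegers K)))) ∧
    (∃ Ψ : (Polynomial (NumberField.RingOfIntegers K) ⧸
          Ideal.span ({Polynomial.C (l : NumberField.RingOfIntegers K), Polynomial.X ^ l}
            : Set (Polynomial (NumberField.RingOfIntegers K)))) →+
        (Polynomial (NumberField.RingOfIntegers K) ⧸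
          Ideal.span ({Polynomial.C (l : NumberField.RingOfIntegers K), Polynomial.X ^ l}
            : Set (Polynomial (NumberField.RingOfIntegers K)))),
      ∀ n : ℕ,
        Ideal.Quotient.mk
            (Ideal.span ({Polynomial.C (l : NumberField.RingOfIntegers K), Polynomial.X ^ l}
              : Set (Polynomial (NumberField.RingOfIntegers K))))
            (qrec a₁ a₂ a₃ a₄ ((n + 1) * l)) =
          Ψ (Ideal.Quotient.mk
            (Ideal.span ({Polynomial.C (l : NumberField.RingOfIntegers K), Polynomial.X ^ l}
              : Set (Polynomial (NumberField.RingOfIntegers K))))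
            (qrec a₁ a₂ a₃ a₄ (n * l)))) ∧
    ∃ α β : ℕ, 1 ≤ β ∧
      α + β ≤ l * (Nat.card (NumberField.RingOfIntegers K ⧸
        Ideal.span {(l : NumberField.RingOfIntegers K)})) ^ l ∧
      ∀ m : ℕ, α ≤ m → (l : NumberField.RingOfIntegers K) ∣
        ((qrec a₁ a₂ a₃ a₄ (m + β)).coeff 0 - (qrec a₁ a₂ a₃ a₄ m).coeff 0) :=
  qrec_one_step_recursion_mod_general K a₁ a₂ a₃ a₄ l hl
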